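/- For all real numbers x, y, s with 0 ≤ x, 0 ≤ y, x + y ≤ s and s ≤ 1, the inequality Λ(π(s−x−y)) − Λ(π(s−y)) + Λ(πy) − Λ(π(x+y)) + Λ(πx) ≤ 4Λ(π/4) holds, with equality if and only if (x, y, s) = (1/2, 1/4, 1). -/

import Mathlib

/-!
Write `P_σ(u) = Λ(u) + Λ(σ - u)`. For `σ < π` the derivative of `P_σ` is
`log (sin (σ - u) / sin u)`, so `P_σ` increases strictly up to `u = σ / 2` and, being symmetric
about `σ / 2`, is maximised exactly there. With `σ = π(1 - x)` the identity `Λ(π - θ) = -Λ(θ)`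
(`Λ` is odd, and `π`-periodic because `∫₀^π log|2 sin t| dt = 0`) turns the left-hand side into `P_σ(π(s - x - y)) + P_σ(πy) + Λ(πx) ≤ 4Λ(σ/2) + Λ(πx)`, and the
duplication formula `Λ(2θ) = 2Λ(θ) - 2Λ(π/2 - θ)` rewrites the last bound as
`2 P_{π/2}(πx/2) ≤ 4Λ(π/4)`. Equality forces all three maximisers: `x = 1/2`, then
`s - x - y = y = 1/4`.
-/

open Real

/-- The Lobachevsky function `Λ(θ) = -∫₀^θ log|2 sin t| dt`. -/
noncomputable def Lob (θ : ℝ) : ℝ :=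
  -∫ t in (0:ℝ)..θ, Real.log |2 * Real.sin t|

open intervalIntegral MeasureTheory Set

lemma intervalIntegrable_log_abs_two_mul_sin (a b : ℝ) :
    IntervalIntegrable (fun t => log |2 * sin t|) volume a b := by
  have h : MeromorphicOn (fun t => 2 * sin t) (uIcc a b) :=
    (analyticOnNhd_const.mul analyticOnNhd_sin).meromorphicOn
  simpa [Real.norm_eq_abs] using h.intervalIntegrable_log_norm

lemma ae_sin_two_mul_ne_zero : ∀ᵐ t : ℝ, sin (2 * t) ≠ 0 := by
  refine ae_iff.2 (measure_mono_null (fun t ht => ?_)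
    ((countable_range fun n : ℤ => n * π / 2).measure_zero volume))
  obtain ⟨n, hn⟩ := sin_eq_zero_iff.1 (not_not.1 ht)
  exact ⟨n, by linarith⟩

lemma integral_log_abs_two_mul_sin_zero_pi : ∫ t in (0 : ℝ)..π, log |2 * sin t| = 0 := by
  calc ∫ t in (0 : ℝ)..π, log |2 * sin t|
      = ∫ t in (0 : ℝ)..π, (log 2 + log (sin t)) := by
        refine integral_congr_ae ?_
        filter_upwards [ae_sin_two_mul_ne_zero] with t ht _
        have hs : sin t ≠ 0 := fun h => ht (by rw [sin_two_mul, h]; ring)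
        rw [log_abs, log_mul two_ne_zero hs]
    _ = 0 := by
      rw [integral_add intervalIntegrable_const (by apply intervalIntegrable_log_sin),
        integral_log_sin_zero_pi]
      simp only [intervalIntegral.integral_const, sub_zero, smul_eq_mul, neg_mul]
      ring

lemma continuous_Lob : Continuous Lob :=
  (continuous_primitive intervalIntegrable_log_abs_two_mul_sin 0).neg

lemma hasDerivAt_Lob {θ : ℝ} (h : sin θ ≠ 0) : HasDerivAt Lob (-log |2 * sin θ|) θ := by
  have hmeas : Measurable fun t => log |2 * sin t| := by fun_prop
  exact .neg <| integral_hasDerivAt_right (intervalIntegrable_log_abs_two_mul_sin 0 θ)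
    hmeas.stronglyMeasurable.stronglyMeasurableAtFilter
    (ContinuousAt.log (by fun_prop) (by simpa using h))

lemma Lob_neg (θ : ℝ) : Lob (-θ) = -Lob θ := by
  have h := integral_comp_neg (a := 0) (b := θ) fun t => log |2 * sin t|
  simp only [sin_neg, mul_neg, abs_neg, neg_zero] at h
  rw [Lob, Lob, integral_symm, h, neg_neg]

lemma periodic_Lob : Function.Periodic Lob π := by
  intro θ
  have hper : Function.Periodic (fun t => log |2 * sin t|) π := fun t => by
    simp only [sin_add_pi, mul_neg, abs_neg]
  rw [Lob, Lob, ← integral_add_adjacent_intervals (intervalIntegrable_log_abs_two_mul_sin 0 θ)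
    (intervalIntegrable_log_abs_two_mul_sin θ (θ + π)), hper.intervalIntegral_add_eq θ 0,
    zero_add, integral_log_abs_two_mul_sin_zero_pi, add_zero]

lemma Lob_pi_sub (θ : ℝ) : Lob (π - θ) = -Lob θ := by
  rw [sub_eq_neg_add, periodic_Lob, Lob_neg]

lemma Lob_pi_div_two : Lob (π / 2) = 0 := by
  have h := Lob_pi_sub (π / 2)
  rw [sub_half] at h
  linarith

lemma Lob_two_mul (θ : ℝ) : Lob (2 * θ) = 2 * Lob θ - 2 * Lob (π / 2 - θ) := by
  have hsplit : ∫ t in (0 : ℝ)..θ, log |2 * sin (2 * t)|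
      = ∫ t in (0 : ℝ)..θ, (log |2 * sin t| + log |2 * sin (t + π / 2)|) := by
    refine integral_congr_ae ?_
    filter_upwards [ae_sin_two_mul_ne_zero] with t ht _
    rw [sin_two_mul] at ht
    rw [sin_add_pi_div_two, ← log_mul (by simpa using left_ne_zero_of_mul ht)
      (by simpa using right_ne_zero_of_mul ht), ← abs_mul, sin_two_mul]
    ring_nf
  have hshift : ∫ t in (0 : ℝ)..θ, log |2 * sin (t + π / 2)| = Lob (π / 2 - θ) := by
    rw [integral_comp_add_right (fun t => log |2 * sin t|), zero_add,
      ← integral_interval_sub_left (intervalIntegrable_log_abs_two_mul_sin 0 _)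
        (intervalIntegrable_log_abs_two_mul_sin 0 _), ← neg_neg (Lob (π / 2 - θ)),
      ← Lob_pi_sub, show π - (π / 2 - θ) = θ + π / 2 by ring]
    have h := Lob_pi_div_two
    simp only [Lob] at h ⊢
    linarith
  have hint : IntervalIntegrable (fun t => log |2 * sin (t + π / 2)|) volume 0 θ := by
    simpa using (intervalIntegrable_log_abs_two_mul_sin (π / 2) (θ + π / 2)).comp_add_right (π / 2)
  have hscale := integral_comp_mul_left (a := 0) (b := θ) (fun t => log |2 * sin t|)
    two_ne_zero
  rw [hsplit, integral_add (intervalIntegrable_log_abs_two_mul_sin 0 θ) hint, hshift, mul_zero,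
    smul_eq_mul] at hscale
  simp only [Lob] at hscale ⊢
  linarith

lemma strictMonoOn_Lob_add_Lob_sub {σ : ℝ} (hσ : σ < π) :
    StrictMonoOn (fun u => Lob u + Lob (σ - u)) (Icc 0 (σ / 2)) := by
  refine strictMonoOn_of_deriv_pos (convex_Icc _ _)
    (continuous_Lob.add (continuous_Lob.comp (continuous_sub_left σ))).continuousOn
    fun v hv => ?_
  rw [interior_Icc] at hv
  obtain ⟨hv₀, hvσ⟩ := hv
  have hsin_v : 0 < sin v := sin_pos_of_pos_of_lt_pi hv₀ (by linarith)
  have hsin_lt : sin v < sin (σ - v) := by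
    have h := sin_sub_sin (σ - v) v
    have h₁ : 0 < sin ((σ - v - v) / 2) := sin_pos_of_pos_of_lt_pi (by linarith) (by linarith)
    have h₂ : 0 < cos ((σ - v + v) / 2) := cos_pos_of_mem_Ioo ⟨by linarith, by linarith⟩
    nlinarith [mul_pos h₁ h₂]
  have hderiv : HasDerivAt (fun u => Lob u + Lob (σ - u))
      (log |2 * sin (σ - v)| - log |2 * sin v|) v :=
    ((hasDerivAt_Lob hsin_v.ne').add ((hasDerivAt_Lob (hsin_v.trans hsin_lt).ne').comp v
      ((hasDerivAt_id v).const_sub σ))).congr_deriv (by ring)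
  rw [hderiv.deriv, sub_pos, abs_of_pos (by linarith), abs_of_pos (by linarith)]
  exact log_lt_log (by linarith) (by linarith)

lemma Lob_add_Lob_sub_lt {σ u : ℝ} (hσ : σ < π) (hu₀ : 0 ≤ u) (huσ : u ≤ σ) (hu : u ≠ σ / 2) :
    Lob u + Lob (σ - u) < 2 * Lob (σ / 2) := by
  wlog hlt : u < σ / 2 generalizing u
  · have hgt : σ / 2 < u := lt_of_le_of_ne (not_lt.1 hlt) hu.symm
    have h := this (u := σ - u) (by linarith) (by linarith) (fun h => hu (by linarith))
      (by linarith)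
    rwa [sub_sub_cancel, add_comm] at h
  have h := strictMonoOn_Lob_add_Lob_sub hσ ⟨hu₀, hlt.le⟩ ⟨by linarith, le_rfl⟩ hlt
  simpa only [sub_half, ← two_mul] using h

lemma Lob_add_Lob_sub_le {σ u : ℝ} (hσ : σ ≤ π) (hu₀ : 0 ≤ u) (huσ : u ≤ σ) :
    Lob u + Lob (σ - u) ≤ 2 * Lob (σ / 2) := by
  rcases hσ.lt_or_eq with hσ | rfl
  · rcases eq_or_ne u (σ / 2) with rfl | hu
    · rw [sub_half, two_mul]
    · exact (Lob_add_Lob_sub_lt hσ hu₀ huσ hu).le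
  · rw [Lob_pi_sub, Lob_pi_div_two]
    simp

lemma Lob_add_Lob_sub_eq_iff {σ u : ℝ} (hσ : σ < π) (hu₀ : 0 ≤ u) (huσ : u ≤ σ) :
    Lob u + Lob (σ - u) = 2 * Lob (σ / 2) ↔ u = σ / 2 := by
  refine ⟨fun h => by_contra fun hu => (Lob_add_Lob_sub_lt hσ hu₀ huσ hu).ne h, ?_⟩
  rintro rfl
  rw [sub_half, two_mul]

lemma Lob_sum_eq_pairs (x y s : ℝ) :
    Lob (π * (s - x - y)) - Lob (π * (s - y)) + Lob (π * y) - Lob (π * (x + y)) + Lob (π * x) =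
      (Lob (π * (s - x - y)) + Lob (π * (1 - x) - π * (s - x - y)) - 2 * Lob (π * (1 - x) / 2))
        + (Lob (π * y) + Lob (π * (1 - x) - π * y) - 2 * Lob (π * (1 - x) / 2))
        + 2 * (Lob (π * x / 2) + Lob (π / 2 - π * x / 2)) := by
  have e₁ : Lob (π * (1 - x) - π * (s - x - y)) = -Lob (π * (s - y)) := by
    rw [← Lob_pi_sub]; congr 1; ring
  have e₂ : Lob (π * (1 - x) - π * y) = -Lob (π * (x + y)) := by
    rw [← Lob_pi_sub]; congr 1; ring
  have e₃ := Lob_two_mul (π * x / 2)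
  rw [show 2 * (π * x / 2) = π * x by ring] at e₃
  rw [e₁, e₂, e₃, show π * (1 - x) / 2 = π / 2 - π * x / 2 by ring]
  ring

theorem stmt_17 (x y s : ℝ) (hx : 0 ≤ x) (hy : 0 ≤ y) (hxy : x + y ≤ s) (hs : s ≤ 1) :
    (Lob (π*(s - x - y)) - Lob (π*(s - y)) + Lob (π*y) - Lob (π*(x + y)) + Lob (π*x)
        ≤ 4 * Lob (π/4)) ∧
    (Lob (π*(s - x - y)) - Lob (π*(s - y)) + Lob (π*y) - Lob (π*(x + y)) + Lob (π*x)
        = 4 * Lob (π/4) ↔ x = 1/2 ∧ y = 1/4 ∧ s = 1) := by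
  have hπ := pi_pos
  have hσ : π * (1 - x) ≤ π := by nlinarith
  have h₁ := Lob_add_Lob_sub_le hσ (u := π * (s - x - y)) (mul_nonneg hπ.le (by linarith))
    (mul_le_mul_of_nonneg_left (by linarith) hπ.le)
  have h₂ := Lob_add_Lob_sub_le hσ (u := π * y) (by positivity)
    (mul_le_mul_of_nonneg_left (by linarith) hπ.le)
  have h₃ := Lob_add_Lob_sub_le (σ := π / 2) (u := π * x / 2) (by linarith) (by positivity)
    (by nlinarith)
  rw [Lob_sum_eq_pairs, show π / 4 = π / 2 / 2 by ring]
  refine ⟨by linarith, fun h => ?_, ?_⟩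
  · have hx' := (Lob_add_Lob_sub_eq_iff (σ := π / 2) (u := π * x / 2) (by linarith)
      (by positivity) (by nlinarith)).1 (by linarith)
    obtain rfl : x = 1 / 2 := by field_simp at hx'; linarith
    have hσ' : π * (1 - 1 / 2) < π := by linarith
    have hy' := (Lob_add_Lob_sub_eq_iff hσ' (u := π * y) (by positivity) (by nlinarith)).1
      (by linarith)
    have hs' := (Lob_add_Lob_sub_eq_iff hσ' (u := π * (s - 1 / 2 - y)) (by nlinarith)
      (by nlinarith)).1 (by linarith)
    field_simp at hy' hs'
    exact ⟨rfl, by linarith, by linarith⟩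
  · rintro ⟨rfl, rfl, rfl⟩
    ring_nf
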